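/- The polytope W_n = {(t_1,...,t_n) ∈ ℝ^n : Σ_{k=1}^n t_k = c([1,n]), and Σ_{k∈I} t_k ≥ c(I) for all cyclic subintervals I of [1,n]}, where c(I) = 3^{#I}, has nonempty interior in the hyperplane {Σ_{k=1}^n t_k = c([1,n])}; in particular W_n is an (n-1)-dimensional convex polytope. -/
import Mathlib

open Finset

/-- A cyclic subinterval of `[1, n]` (here modelled on `Fin n`): either an ordinary proper
subinterval `[i, j]`, or a wrap-around set `{1, …, i} ∪ {j, …, n}` with `i + 1 < j`
(excluding the full circle). -/
def IsCycInt (n : ℕ) (S : Finset (Fin n)) : Prop :=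
  (∃ i j : Fin n, i ≤ j ∧ ¬((i : ℕ) = 0 ∧ (j : ℕ) = n - 1) ∧ S = Finset.Icc i j) ∨
  (∃ i j : Fin n, (i : ℕ) + 1 < (j : ℕ) ∧ S = Finset.Iic i ∪ Finset.Ici j)

/-- The convex realization of the cyclohedron `W_n` (Bott–Taubes polytope), as a subset of
`ℝ^n`:  `∑ t_k = c([1,n]) = 3^n`, and `∑_{k ∈ I} t_k ≥ c(I) = 3^{#I}` for every cyclic
subinterval `I` of `[1, n]`. -/
def WnPoly (n : ℕ) : Set (Fin n → ℝ) :=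
  {t | (∑ k, t k) = 3 ^ n ∧
    ∀ S : Finset (Fin n), IsCycInt n S → (3 : ℝ) ^ S.card ≤ ∑ k ∈ S, t k}


lemma pow3_ge (k : ℕ) : 2 * k + 1 ≤ 3 ^ k := by
  induction k with
  | zero => simp
  | succ k ih =>
    have : 3 ^ (k+1) = 3 * 3 ^ k := by ring
    omega

lemma key_nat (m n : ℕ) (h1 : 1 ≤ m) (h2 : m < n) : n * 3 ^ m + 3 ≤ m * 3 ^ n := by
  have hk : n - m ≥ 1 := by omega
  have h3 : 3 ^ n = 3 ^ (n - m) * 3 ^ m := by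
    rw [← pow_add]; congr 1; omega
  have hp := pow3_ge (n - m)
  have hm : 1 ≤ 3 ^ m := Nat.one_le_pow _ _ (by norm_num)
  have hm3 : 3 ≤ 3 ^ m := by
    calc 3 = 3 ^ 1 := by norm_num
    _ ≤ 3 ^ m := Nat.pow_le_pow_right (by norm_num) h1
  obtain ⟨k, hk2⟩ : ∃ k, n = m + k := ⟨n - m, by omega⟩
  subst hk2
  have hk1 : 1 ≤ k := by omega
  have h3' : 3 ^ (m + k) = 3 ^ k * 3 ^ m := by rw [← pow_add]; ring_nf
  rw [h3']
  have hpk : 2 * k + 1 ≤ 3 ^ k := pow3_ge k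
  calc (m + k) * 3 ^ m + 3 ≤ (m + k) * 3 ^ m + k * 3 ^ m := by
        have : 3 ≤ k * 3 ^ m := le_trans hm3 (Nat.le_mul_of_pos_left _ (by omega))
        omega
    _ = (m + 2 * k) * 3 ^ m := by ring
    _ ≤ (m * (2 * k + 1)) * 3 ^ m := by
        have : m + 2 * k ≤ m * (2 * k + 1) := by nlinarith
        exact Nat.mul_le_mul_right _ this
    _ ≤ m * 3 ^ k * 3 ^ m := by
        have := Nat.mul_le_mul_left m hpk
        exact Nat.mul_le_mul_right _ this
    _ = m * (3 ^ k * 3 ^ m) := by ring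

lemma cyc_card {n : ℕ} {S : Finset (Fin n)} (h : IsCycInt n S) :
    1 ≤ S.card ∧ S.card < n := by
  rcases h with ⟨i, j, hij, hne, rfl⟩ | ⟨i, j, hij, rfl⟩
  · have hc : (Finset.Icc i j).card = (j : ℕ) + 1 - (i : ℕ) := by
      rw [Fin.card_Icc]
    have hj := j.isLt
    have hi := Fin.le_def.mp hij
    constructor
    · rw [hc]; omega
    · rw [hc]
      by_contra hlt
      exact hne ⟨by omega, by omega⟩
  · have hj := j.isLt
    have hmem : i ∈ Finset.Iic i ∪ Finset.Ici j := by simp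
    constructor
    · exact Finset.card_pos.mpr ⟨i, hmem⟩
    · have hne : (Finset.Iic i ∪ Finset.Ici j) ≠ Finset.univ := by
        intro hu
        have : (⟨(i : ℕ) + 1, by omega⟩ : Fin n) ∈ Finset.Iic i ∪ Finset.Ici j := by
          rw [hu]; exact Finset.mem_univ _
        simp only [Finset.mem_union, Finset.mem_Iic, Finset.mem_Ici, Fin.le_def] at this
        simp at this
        omega
      have := Finset.card_lt_card (Finset.ssubset_univ_iff.mpr hne)
      simpa using this

/-- `W_n` has nonempty interior in the hyperplane `{∑ t_k = c([1,n])}`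
(interior relative to the hyperplane); in particular `W_n` is an `(n-1)`-dimensional
convex polytope. -/
theorem WnPoly_nonempty_relative_interior (n : ℕ) (hn : 1 ≤ n) :
    (∃ t ∈ WnPoly n, ∃ ε > (0 : ℝ), ∀ s : Fin n → ℝ,
        (∑ k, s k) = 3 ^ n → dist s t < ε → s ∈ WnPoly n) ∧
      Convex ℝ (WnPoly n) := by
  have hn0 : (0 : ℝ) < n := by exact_mod_cast hn
  set t : Fin n → ℝ := fun _ => 3 ^ n / n with ht
  have hsumt : (∑ k, t k) = 3 ^ n := by
    simp [ht, Finset.sum_const, Fintype.card_fin]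
    field_simp
  -- key real inequality
  have hkey : ∀ S : Finset (Fin n), IsCycInt n S →
      (3 : ℝ) ^ S.card + 3 / n ≤ ∑ k ∈ S, t k := by
    intro S hS
    obtain ⟨h1, h2⟩ := cyc_card hS
    have hsum : (∑ k ∈ S, t k) = S.card * (3 ^ n / n) := by
      simp [ht, Finset.sum_const]
    rw [hsum]
    have hnat := key_nat S.card n h1 h2
    have hR : (n : ℝ) * 3 ^ S.card + 3 ≤ S.card * 3 ^ n := by exact_mod_cast hnat
    have e1 : (3 : ℝ) ^ S.card + 3 / n = (n * 3 ^ S.card + 3) / n := by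
      field_simp
    have e2 : (S.card : ℝ) * (3 ^ n / n) = (S.card * 3 ^ n) / n := by ring
    rw [e1, e2]
    gcongr
  constructor
  · refine ⟨t, ⟨hsumt, fun S hS => le_trans (le_add_of_nonneg_right (by positivity)) (hkey S hS)⟩,
      3 / (n * n), by positivity, fun s hsum hdist => ⟨hsum, fun S hS => ?_⟩⟩
    obtain ⟨h1, h2⟩ := cyc_card hS
    have hSne : S.Nonempty := Finset.card_pos.mp h1
    have hsk : ∀ k ∈ S, t k - 3 / (n * n) < s k := by
      intro k _
      have : dist (s k) (t k) ≤ dist s t := dist_le_pi_dist s t k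
      have habs : |s k - t k| < 3 / (n * n) := by
        rw [← Real.dist_eq]; exact lt_of_le_of_lt this hdist
      have := abs_lt.mp habs
      linarith [this.1]
    have hlt : (∑ k ∈ S, (t k - 3 / (n * n))) < ∑ k ∈ S, s k :=
      Finset.sum_lt_sum_of_nonempty hSne hsk
    have hcardn : (S.card : ℝ) ≤ n := by exact_mod_cast le_of_lt h2
    have hexp : (∑ k ∈ S, (t k - 3 / (n * n))) = (∑ k ∈ S, t k) - S.card * (3 / (n * n)) := by
      simp [Finset.sum_sub_distrib, Finset.sum_const, nsmul_eq_mul]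
    have h3nn : (S.card : ℝ) * (3 / (n * n)) ≤ 3 / n := by
      have h := mul_le_mul_of_nonneg_right hcardn (by positivity : (0:ℝ) ≤ 3 / (n * n))
      have e : (n : ℝ) * (3 / (n * n)) = 3 / n := by field_simp
      linarith
    have := hkey S hS
    linarith
  · intro x hx y hy a b ha hb hab
    refine ⟨?_, fun S hS => ?_⟩
    · simp only [Pi.add_apply, Pi.smul_apply, smul_eq_mul]
      rw [Finset.sum_add_distrib, ← Finset.mul_sum, ← Finset.mul_sum, hx.1, hy.1,
        ← add_mul, hab, one_mul]
    · simp only [Pi.add_apply, Pi.smul_apply, smul_eq_mul]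
      rw [Finset.sum_add_distrib, ← Finset.mul_sum, ← Finset.mul_sum]
      have h1 := hx.2 S hS
      have h2 := hy.2 S hS
      calc (3:ℝ) ^ S.card = a * 3 ^ S.card + b * 3 ^ S.card := by
            rw [← add_mul, hab, one_mul]
        _ ≤ a * ∑ i ∈ S, x i + b * ∑ i ∈ S, y i :=
            add_le_add (mul_le_mul_of_nonneg_left h1 ha) (mul_le_mul_of_nonneg_left h2 hb)
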